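/- Let Q be the 2×2 matrix with rows (2,2) and (−2,2), and let C̄₁, …, C̄₆ be the six closed trapezoid pairs of the frequency ring. Then: (a) for each j ∈ {1,…,6} and every n ∈ Qℤ², ∫_{C̄_j} e^{i n·ξ} dξ = π²/2 if n = 0 and = 0 if n ≠ 0 (i.e. each C̄_j is a frequency support of the lattice Qℤ², whose fundamental cell has area 8, with (2π)²/8 = π²/2); and (b) for every n ∈ 2ℤ², ∫_{[−π/2,π/2]²} e^{i n·ξ} dξ = π² if n = 0 and = 0 if n ≠ 0 (i.e. [−π/2,π/2]² is a frequency support of the lattice 2ℤ²). -/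

import Mathlib

open scoped Real Matrix
open MeasureTheory

/-- The closed frequency ring `R = [−π,π]² \ (−π/2,π/2)²`. -/
def freqRing : Set (Fin 2 → ℝ) :=
  {ξ | (|ξ 0| ≤ π ∧ |ξ 1| ≤ π) ∧ (π / 2 ≤ |ξ 0| ∨ π / 2 ≤ |ξ 1|)}

/-- `C̄₀ = [−π/2,π/2]²` and the six closed trapezoid pairs `C̄₁, …, C̄₆` of the
frequency ring, cut by the lines through the origin of slopes `±1, ±3, ±1/3`. -/
def trapPair : Fin 7 → Set (Fin 2 → ℝ) :=
  ![{ξ | |ξ 0| ≤ π / 2 ∧ |ξ 1| ≤ π / 2},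
    {ξ ∈ freqRing | |ξ 1| ≤ |ξ 0| ∧ |ξ 0| ≤ 3 * |ξ 1| ∧ ξ 0 * ξ 1 ≤ 0},
    {ξ ∈ freqRing | 3 * |ξ 1| ≤ |ξ 0|},
    {ξ ∈ freqRing | |ξ 1| ≤ |ξ 0| ∧ |ξ 0| ≤ 3 * |ξ 1| ∧ 0 ≤ ξ 0 * ξ 1},
    {ξ ∈ freqRing | |ξ 0| ≤ |ξ 1| ∧ |ξ 1| ≤ 3 * |ξ 0| ∧ ξ 0 * ξ 1 ≤ 0},
    {ξ ∈ freqRing | 3 * |ξ 0| ≤ |ξ 1|},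
    {ξ ∈ freqRing | |ξ 0| ≤ |ξ 1| ∧ |ξ 1| ≤ 3 * |ξ 0| ∧ 0 ≤ ξ 0 * ξ 1}]

open Set Real

/-!
Each horizontal trapezoid pair is `T ∪ -T` for a trapezoid
`T = {π/2 ≤ x ≤ π, u x ≤ y ≤ v x}` whose slopes `u, v = u + 2/3` lie in `1/3 + (2/3)ℤ`; the
vertical pairs are their mirror images in the diagonal, and `Qℤ²` is invariant under that mirror.
By symmetry the integral of `e^{i(ax+by)}` over `T ∪ -T` is `2 ∫_T cos (ax + by)`. Integrating
first in `y`, for `b ≠ 0` this leaves `∫_{π/2}^π (sin ((a+bv)x) - sin ((a+bu)x)) / b dx`, and for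
`(a, b) ∈ Qℤ²` both frequencies `r = a + bu, a + bv` lie in `(4/3)ℤ`, where
`∫_{π/2}^π sin (rx) dx = (cos (rπ/2) - cos (rπ)) / r = 0`. For `b = 0` we have `a ∈ 4ℤ`, and
`(v - u) ∫_{π/2}^π x cos (ax) dx` vanishes unless `a = 0`, when it is `|T| = π²/4`.
The square `[-π/2, π/2]²` is a product, and `∫_{-π/2}^{π/2} e^{2ikx} dx = π [k = 0]`.
-/

theorem integral_sin_mul_pi_div_two_pi {r : ℝ} {k : ℤ} (hr : 3 * r = 4 * k) :
    ∫ x in π / 2..π, sin (r * x) = 0 := by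
  rcases eq_or_ne r 0 with rfl | hr0
  · simp
  -- `r π = 2 k π - r π / 2`
  have hcos : cos (r * π) = cos (r * (π / 2)) := by
    rw [← cos_int_mul_two_pi_sub _ k]
    congr 1
    linear_combination (-π / 2) * hr
  rw [intervalIntegral.integral_comp_mul_left _ hr0, integral_sin, hcos, sub_self, smul_zero]

theorem integral_mul_cos_mul_pi_div_two_pi {k : ℤ} (hk : k ≠ 0) :
    ∫ x in π / 2..π, x * cos (4 * k * x) = 0 := by
  set a : ℝ := 4 * k
  have ha : a ≠ 0 := by positivity
  have hderiv : ∀ x, HasDerivAt (fun x => x * sin (a * x) / a + cos (a * x) / a ^ 2)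
      (x * cos (a * x)) x := by
    intro x
    have hs : HasDerivAt (fun x => sin (a * x)) (cos (a * x) * a) x := by
      simpa using ((hasDerivAt_id x).const_mul a).sin
    have hc : HasDerivAt (fun x => cos (a * x)) (-sin (a * x) * a) x := by
      simpa using ((hasDerivAt_id x).const_mul a).cos
    refine ((((hasDerivAt_id' x).mul hs).div_const a).add (hc.div_const (a ^ 2))).congr_deriv ?_
    field_simp
    ring
  rw [intervalIntegral.integral_eq_sub_of_hasDerivAt (fun x _ => hderiv x)
    (by apply Continuous.intervalIntegrable; fun_prop)]
  have hs₁ : sin (a * π) = 0 := by convert sin_int_mul_pi (4 * k) using 2; push_cast; ring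
  have hs₂ : sin (a * (π / 2)) = 0 := by convert sin_int_mul_pi (2 * k) using 2; push_cast; ring
  have hc₁ : cos (a * π) = 1 := by convert cos_int_mul_two_pi (2 * k) using 2; push_cast; ring
  have hc₂ : cos (a * (π / 2)) = 1 := by convert cos_int_mul_two_pi k using 2; ring
  rw [hs₁, hs₂, hc₁, hc₂]
  ring

theorem setIntegral_Icc_exp_I_mul_even (k : ℤ) :
    ∫ x in Icc (-(π / 2)) (π / 2), Complex.exp (Complex.I * (2 * k : ℝ) * x) =
      if k = 0 then (π : ℂ) else 0 := by
  split_ifs with hk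
  · simp [hk, pi_pos.le]
  have hc : Complex.I * (2 * k : ℝ) ≠ 0 :=
    mul_ne_zero Complex.I_ne_zero (by exact_mod_cast mul_ne_zero two_ne_zero hk)
  rw [integral_Icc_eq_integral_Ioc, ← intervalIntegral.integral_of_le (by linarith [pi_pos]),
    integral_exp_mul_complex hc]
  have h₁ : Complex.I * (2 * k : ℝ) * (π / 2 : ℝ) = (k * π : ℝ) * Complex.I := by push_cast; ring
  have h₂ : Complex.I * (2 * k : ℝ) * (-(π / 2) : ℝ) = (-(k * π) : ℝ) * Complex.I := by
    push_cast; ring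
  rw [h₁, h₂, Complex.exp_mul_I, Complex.exp_mul_I, ← Complex.ofReal_sin, ← Complex.ofReal_sin,
    sin_neg, sin_int_mul_pi]
  simp

theorem setIntegral_union_neg_exp_I_mul {E : Type*} [MeasurableSpace E] [AddGroup E]
    [MeasurableNeg E] {μ : Measure E} [μ.IsNegInvariant] {s : Set E} (hs : MeasurableSet s)
    (hμs : μ s ≠ ⊤) (hdisj : Disjoint s (-s)) {φ : E → ℝ} (hφ : Measurable φ)
    (hodd : ∀ x, φ (-x) = -φ x) :
    ∫ x in s ∪ -s, Complex.exp (Complex.I * φ x) ∂μ = (2 * ∫ x in s, cos (φ x) ∂μ : ℝ) := by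
  have hint : ∀ ψ : E → ℝ, Measurable ψ → ∀ t, μ t ≠ ⊤ →
      IntegrableOn (fun x => Complex.exp (Complex.I * ψ x)) t μ :=
    fun ψ hψ t ht => Measure.integrableOn_of_bounded (M := 1) ht (by fun_prop)
      (ae_of_all _ fun x => by rw [mul_comm, Complex.norm_exp_ofReal_mul_I])
  have hneg : ∫ x in -s, Complex.exp (Complex.I * φ x) ∂μ =
      ∫ x in s, Complex.exp (Complex.I * (-φ x : ℝ)) ∂μ := by
    rw [← (Measure.measurePreserving_neg μ).setIntegral_preimage_emb
      (MeasurableEquiv.neg E).measurableEmbedding, Set.neg_preimage, neg_neg]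
    simp only [hodd]
  rw [setIntegral_union hdisj hs.neg (hint φ hφ s hμs) (hint φ hφ _ (by rwa [Measure.measure_neg])),
    hneg, ← integral_add (hint φ hφ s hμs) (hint (fun x => -φ x) hφ.neg s hμs), Complex.ofReal_mul,
    ← integral_complex_ofReal, ← integral_const_mul]
  congr 1 with x
  rw [Complex.ofReal_cos, Complex.ofReal_ofNat, Complex.two_cos]
  push_cast
  ring_nf

theorem setIntegral_region_between_cc {α E : Type*} [MeasurableSpace α] {μ : Measure α}
    [SFinite μ] [NormedAddCommGroup E] [NormedSpace ℝ E] {l h : α → ℝ} {s : Set α}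
    (hl : Measurable l) (hh : Measurable h) (hs : MeasurableSet s) {f : α × ℝ → E}
    (hf : IntegrableOn f {p | p.1 ∈ s ∧ p.2 ∈ Icc (l p.1) (h p.1)} (μ.prod volume)) :
    ∫ p in {p : α × ℝ | p.1 ∈ s ∧ p.2 ∈ Icc (l p.1) (h p.1)}, f p ∂μ.prod volume =
      ∫ x in s, (∫ y in Icc (l x) (h x), f (x, y)) ∂μ := by
  have hR := measurableSet_region_between_cc hl hh hs
  rw [← integral_indicator hR, integral_prod _ ((integrable_indicator_iff hR).2 hf),
    ← integral_indicator hs]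
  congr 1 with x
  by_cases hx : x ∈ s
  · rw [indicator_of_mem hx, ← integral_indicator measurableSet_Icc]
    congr 1 with y
    simp only [indicator, mem_ofPred_eq, hx, true_and]
  · simp [indicator, hx]

def trapezoid (u v : ℝ) : Set (ℝ × ℝ) :=
  {p | p.1 ∈ Icc (π / 2) π ∧ p.2 ∈ Icc (u * p.1) (v * p.1)}

theorem trapezoid_subset (u v : ℝ) :
    trapezoid u v ⊆ Icc (π / 2) π ×ˢ Icc (-((|u| + |v|) * π)) ((|u| + |v|) * π) := by
  rintro ⟨x, y⟩ ⟨⟨hx₁, hx₂⟩, hy₁, hy₂⟩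
  have hx : 0 ≤ x := le_trans (by positivity) hx₁
  refine ⟨⟨hx₁, hx₂⟩, ?_, ?_⟩
  · nlinarith [neg_abs_le u, abs_nonneg u, abs_nonneg v]
  · nlinarith [le_abs_self v, abs_nonneg u, abs_nonneg v]

theorem volume_trapezoid_ne_top (u v : ℝ) : volume (trapezoid u v) ≠ ⊤ :=
  measure_ne_top_of_subset (trapezoid_subset u v)
    (isCompact_Icc.prod isCompact_Icc).measure_lt_top.ne

theorem measurableSet_trapezoid (u v : ℝ) : MeasurableSet (trapezoid u v) :=
  measurableSet_region_between_cc (measurable_const_mul u) (measurable_const_mul v)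
    measurableSet_Icc

theorem disjoint_trapezoid_neg (u v : ℝ) : Disjoint (trapezoid u v) (-trapezoid u v) :=
  Set.disjoint_left.2 fun p hp hp' => by
    have := hp.1.1
    have := hp'.1.1
    simp only [Prod.fst_neg] at this
    linarith [pi_pos]

theorem setIntegral_trapezoid_eq_integral_integral {u v : ℝ} (huv : u ≤ v) {f : ℝ × ℝ → ℝ}
    (hf : IntegrableOn f (trapezoid u v)) :
    ∫ p in trapezoid u v, f p = ∫ x in π / 2..π, ∫ y in u * x..v * x, f (x, y) := by
  rw [Measure.volume_eq_prod] at hf ⊢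
  rw [trapezoid, setIntegral_region_between_cc (by fun_prop) (by fun_prop) measurableSet_Icc hf]
  have hinner : ∀ x ∈ Icc (π / 2) π, ∫ y in Icc (u * x) (v * x), f (x, y) =
      ∫ y in u * x..v * x, f (x, y) := fun x hx => by
    have : 0 ≤ x := le_trans (by positivity) hx.1
    rw [integral_Icc_eq_integral_Ioc, intervalIntegral.integral_of_le (by nlinarith)]
  rw [setIntegral_congr_fun measurableSet_Icc hinner, integral_Icc_eq_integral_Ioc,
    ← intervalIntegral.integral_of_le (by linarith [pi_pos])]

theorem setIntegral_trapezoid_cos {a b u v : ℝ} (huv : u ≤ v)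
    (hu : ∃ k : ℤ, 3 * (a + b * u) = 4 * k) (hv : ∃ k : ℤ, 3 * (a + b * v) = 4 * k)
    (hb : b = 0 → ∃ k : ℤ, a = 4 * k) :
    ∫ p in trapezoid u v, cos (a * p.1 + b * p.2) =
      if a = 0 ∧ b = 0 then (v - u) * (3 * π ^ 2 / 8) else 0 := by
  rw [setIntegral_trapezoid_eq_integral_integral huv
    (Measure.integrableOn_of_bounded (M := 1) (volume_trapezoid_ne_top u v) (by fun_prop)
      (ae_of_all _ fun p => by simpa using abs_cos_le_one _))]
  rcases eq_or_ne b 0 with rfl | hb0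
  · obtain ⟨k, rfl⟩ := hb rfl
    simp only [zero_mul, add_zero, intervalIntegral.integral_const, smul_eq_mul]
    simp_rw [show ∀ x, (v * x - u * x) * cos (4 * k * x) = (v - u) * (x * cos (4 * k * x)) from
      fun x => by ring]
    rw [intervalIntegral.integral_const_mul]
    rcases eq_or_ne k 0 with rfl | hk
    · simp only [Int.cast_zero, mul_zero, zero_mul, cos_zero, mul_one, integral_id, and_self,
        if_true]
      ring
    · rw [integral_mul_cos_mul_pi_div_two_pi hk, mul_zero, if_neg (by simp [hk])]
  · obtain ⟨k, hk⟩ := hu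
    obtain ⟨l, hl⟩ := hv
    have hinner' : ∀ x, ∫ y in u * x..v * x, cos (a * x + b * y) =
        (sin ((a + b * v) * x) - sin ((a + b * u) * x)) / b := fun x => by
      rw [intervalIntegral.integral_comp_add_mul cos hb0, integral_cos, smul_eq_mul]
      ring_nf
    simp_rw [hinner']
    rw [intervalIntegral.integral_div, intervalIntegral.integral_sub
      (by apply Continuous.intervalIntegrable; fun_prop)
      (by apply Continuous.intervalIntegrable; fun_prop),
      integral_sin_mul_pi_div_two_pi hk, integral_sin_mul_pi_div_two_pi hl, if_neg (by tauto)]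
    simp

theorem setIntegral_trapezoid_union_neg_exp {a b u v : ℝ} (huv : u ≤ v)
    (hu : ∃ k : ℤ, 3 * (a + b * u) = 4 * k) (hv : ∃ k : ℤ, 3 * (a + b * v) = 4 * k)
    (hb : b = 0 → ∃ k : ℤ, a = 4 * k) :
    ∫ p in trapezoid u v ∪ -trapezoid u v, Complex.exp (Complex.I * (a * p.1 + b * p.2 : ℝ)) =
      ((if a = 0 ∧ b = 0 then (v - u) * (3 * π ^ 2 / 4) else 0 : ℝ) : ℂ) := by
  rw [setIntegral_union_neg_exp_I_mul (measurableSet_trapezoid u v) (volume_trapezoid_ne_top u v)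
    (disjoint_trapezoid_neg u v) (by fun_prop)
    (fun p => by simp only [Prod.fst_neg, Prod.snd_neg]; ring),
    setIntegral_trapezoid_cos huv hu hv hb]
  split_ifs <;> ring_nf

theorem setIntegral_trapezoid_union_neg_exp_quincunx {u v : ℝ} {t : ℤ} (hu : 3 * u = 2 * t + 1)
    (hv : v = u + 2 / 3) ⦃a b : ℝ⦄ ⦃k l : ℤ⦄ (hab : a = 2 * (k + l) ∧ b = 2 * (l - k)) :
    ∫ p in trapezoid u v ∪ -trapezoid u v, Complex.exp (Complex.I * (a * p.1 + b * p.2 : ℝ)) =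
      if a = 0 ∧ b = 0 then ((π ^ 2 / 2 : ℝ) : ℂ) else 0 := by
  obtain ⟨rfl, rfl⟩ := hab
  subst hv
  rw [setIntegral_trapezoid_union_neg_exp (by linarith)
    ⟨k + 2 * l + t * (l - k), by push_cast; linear_combination (2 * (l - k) : ℝ) * hu⟩
    ⟨k + 2 * l + (t + 1) * (l - k), by push_cast; linear_combination (2 * (l - k) : ℝ) * hu⟩
    fun h => ⟨k, by linarith⟩]
  split_ifs <;> push_cast <;> ring

/-- `u x² ≤ x y ≤ v x²` is the division-free form of `u ≤ y / x ≤ v`. -/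
theorem mem_trapezoid_union_neg {u v : ℝ} {p : ℝ × ℝ} :
    p ∈ trapezoid u v ∪ -trapezoid u v ↔
      π / 2 ≤ |p.1| ∧ |p.1| ≤ π ∧ u * p.1 ^ 2 ≤ p.1 * p.2 ∧ p.1 * p.2 ≤ v * p.1 ^ 2 := by
  obtain ⟨x, y⟩ := p
  simp only [trapezoid, mem_union, Set.mem_neg, mem_ofPred_eq, mem_Icc, Prod.fst_neg, Prod.snd_neg]
  rcases le_or_gt 0 x with hx | hx
  · rw [abs_of_nonneg hx]
    constructor
    · rintro (⟨⟨h1, h2⟩, h3, h4⟩ | ⟨⟨h1, h2⟩, h3, h4⟩)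
      · exact ⟨h1, h2, by nlinarith, by nlinarith⟩
      · linarith [pi_pos]
    · rintro ⟨h1, h2, h3, h4⟩
      have : 0 < x := by linarith [pi_pos]
      exact Or.inl ⟨⟨h1, h2⟩, by nlinarith, by nlinarith⟩
  · rw [abs_of_neg hx]
    constructor
    · rintro (⟨⟨h1, h2⟩, h3, h4⟩ | ⟨⟨h1, h2⟩, h3, h4⟩)
      · linarith [pi_pos]
      · exact ⟨h1, h2, by nlinarith, by nlinarith⟩
    · rintro ⟨h1, h2, h3, h4⟩
      exact Or.inr ⟨⟨h1, h2⟩, by nlinarith, by nlinarith⟩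

theorem preimage_trapPair_horizontal :
    MeasurableEquiv.finTwoArrow.symm ⁻¹' trapPair 1 =
        trapezoid (-1) (-1 / 3) ∪ -trapezoid (-1) (-1 / 3) ∧
      MeasurableEquiv.finTwoArrow.symm ⁻¹' trapPair 2 =
        trapezoid (-1 / 3) (1 / 3) ∪ -trapezoid (-1 / 3) (1 / 3) ∧
      MeasurableEquiv.finTwoArrow.symm ⁻¹' trapPair 3 =
        trapezoid (1 / 3) 1 ∪ -trapezoid (1 / 3) 1 := by
  have hπ := pi_pos
  refine ⟨?_, ?_, ?_⟩ <;> ext ⟨x, y⟩ <;> rw [mem_trapezoid_union_neg] <;>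
    simp only [mem_preimage, MeasurableEquiv.finTwoArrow_symm_apply, trapPair, freqRing,
      mem_ofPred_eq, Matrix.cons_val, Fin.cons_zero, Fin.cons_one] <;>
    rcases lt_trichotomy x 0 with hx | hx | hx <;> rcases le_total 0 y with hy | hy <;>
    simp only [abs_of_neg, abs_of_pos, abs_of_nonneg, abs_of_nonpos, abs_zero, hx, hy] <;>
    constructor <;> intro h <;> casesm* _ ∧ _, _ ∨ _ <;> (repeat' constructor) <;>
    first | linarith | nlinarith

theorem preimage_trapPair_vertical :
    MeasurableEquiv.finTwoArrow.symm ⁻¹' trapPair 4 =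
        Prod.swap ⁻¹' (MeasurableEquiv.finTwoArrow.symm ⁻¹' trapPair 1) ∧
      MeasurableEquiv.finTwoArrow.symm ⁻¹' trapPair 5 =
        Prod.swap ⁻¹' (MeasurableEquiv.finTwoArrow.symm ⁻¹' trapPair 2) ∧
      MeasurableEquiv.finTwoArrow.symm ⁻¹' trapPair 6 =
        Prod.swap ⁻¹' (MeasurableEquiv.finTwoArrow.symm ⁻¹' trapPair 3) := by
  refine ⟨?_, ?_, ?_⟩ <;> ext ⟨x, y⟩ <;>
    simp only [mem_preimage, MeasurableEquiv.finTwoArrow_symm_apply, trapPair, freqRing,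
      mem_ofPred_eq, Matrix.cons_val, Fin.cons_zero, Fin.cons_one, Prod.fst_swap, Prod.snd_swap,
      mul_comm] <;>
    tauto

theorem preimage_trapPair_zero : MeasurableEquiv.finTwoArrow.symm ⁻¹' trapPair 0 =
    Icc (-(π / 2)) (π / 2) ×ˢ Icc (-(π / 2)) (π / 2) := by
  ext ⟨x, y⟩
  simp only [mem_preimage, MeasurableEquiv.finTwoArrow_symm_apply, trapPair, mem_ofPred_eq,
    Matrix.cons_val, Fin.cons_zero, Fin.cons_one, mem_prod, mem_Icc, abs_le]

theorem setIntegral_finTwoArrow_symm_preimage {E : Type*} [NormedAddCommGroup E]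
    [NormedSpace ℝ E] (s : Set (Fin 2 → ℝ)) (g : (Fin 2 → ℝ) → E) :
    ∫ ξ in s, g ξ = ∫ p in MeasurableEquiv.finTwoArrow.symm ⁻¹' s, g ![p.1, p.2] :=
  ((MeasurePreserving.symm _ (volume_preserving_finTwoArrow ℝ)).setIntegral_preimage_emb
    MeasurableEquiv.finTwoArrow.symm.measurableEmbedding g s).symm

/-- Swapping coordinates maps `Qℤ²` to itself: `(b, a) = Q (-k, l)` when `(a, b) = Q (k, l)`. -/
theorem setIntegral_swap_preimage_exp_quincunx {s : Set (ℝ × ℝ)} {c : ℂ}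
    (hs : ∀ ⦃a b : ℝ⦄ ⦃k l : ℤ⦄, a = 2 * (k + l) ∧ b = 2 * (l - k) →
      ∫ p in s, Complex.exp (Complex.I * (a * p.1 + b * p.2 : ℝ)) = if a = 0 ∧ b = 0 then c else 0)
    {a b : ℝ} {k l : ℤ} (hab : a = 2 * (k + l) ∧ b = 2 * (l - k)) :
    ∫ p in Prod.swap ⁻¹' s, Complex.exp (Complex.I * (a * p.1 + b * p.2 : ℝ)) =
      if a = 0 ∧ b = 0 then c else 0 := by
  simp_rw [add_comm (a * _), and_comm (a := a = 0)]
  rw [← @hs b a (-k) l ⟨by push_cast; linarith, by push_cast; linarith⟩]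
  exact Measure.measurePreserving_swap.setIntegral_preimage_emb
    MeasurableEquiv.prodComm.measurableEmbedding
    (fun q : ℝ × ℝ => Complex.exp (Complex.I * (b * q.1 + a * q.2 : ℝ))) s

theorem setIntegral_preimage_trapPair_exp (j : Fin 6) {a b : ℝ} {k l : ℤ}
    (hab : a = 2 * (k + l) ∧ b = 2 * (l - k)) :
    ∫ p in MeasurableEquiv.finTwoArrow.symm ⁻¹' trapPair j.succ,
        Complex.exp (Complex.I * (a * p.1 + b * p.2 : ℝ)) =
      if a = 0 ∧ b = 0 then ((π ^ 2 / 2 : ℝ) : ℂ) else 0 := by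
  obtain ⟨h₁, h₂, h₃⟩ := preimage_trapPair_horizontal
  obtain ⟨h₄, h₅, h₆⟩ := preimage_trapPair_vertical
  have I₁ := setIntegral_trapezoid_union_neg_exp_quincunx (u := -1) (v := -1 / 3) (t := -2)
    (by norm_num) (by norm_num)
  have I₂ := setIntegral_trapezoid_union_neg_exp_quincunx (u := -1 / 3) (v := 1 / 3) (t := -1)
    (by norm_num) (by norm_num)
  have I₃ := setIntegral_trapezoid_union_neg_exp_quincunx (u := 1 / 3) (v := 1) (t := 0)
    (by norm_num) (by norm_num)
  fin_cases j <;> simp only [Fin.reduceFinMk, Fin.reduceSucc, Fin.isValue]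
  · rw [h₁]; exact I₁ hab
  · rw [h₂]; exact I₂ hab
  · rw [h₃]; exact I₃ hab
  · rw [h₄, h₁]; exact setIntegral_swap_preimage_exp_quincunx I₁ hab
  · rw [h₅, h₂]; exact setIntegral_swap_preimage_exp_quincunx I₂ hab
  · rw [h₆, h₃]; exact setIntegral_swap_preimage_exp_quincunx I₃ hab

theorem setIntegral_square_exp {a b : ℝ} {k l : ℤ} (hab : a = 2 * k ∧ b = 2 * l) :
    ∫ p in Icc (-(π / 2)) (π / 2) ×ˢ Icc (-(π / 2)) (π / 2),
        Complex.exp (Complex.I * (a * p.1 + b * p.2 : ℝ)) =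
      if a = 0 ∧ b = 0 then ((π ^ 2 : ℝ) : ℂ) else 0 := by
  obtain ⟨rfl, rfl⟩ := hab
  have hsplit : ∀ p : ℝ × ℝ, Complex.exp (Complex.I * (2 * k * p.1 + 2 * l * p.2 : ℝ)) =
      Complex.exp (Complex.I * (2 * k : ℝ) * p.1) * Complex.exp (Complex.I * (2 * l : ℝ) * p.2) :=
    fun p => by rw [← Complex.exp_add]; push_cast; ring_nf
  simp_rw [hsplit]
  rw [Measure.volume_eq_prod,
    setIntegral_prod_mul (fun x : ℝ => Complex.exp (Complex.I * (2 * k : ℝ) * x))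
      (fun y : ℝ => Complex.exp (Complex.I * (2 * l : ℝ) * y)),
    setIntegral_Icc_exp_I_mul_even, setIntegral_Icc_exp_I_mul_even]
  split_ifs <;> simp_all [sq]

/-- (a) each trapezoid pair `C̄_j` (`j = 1,…,6`) is a frequency support
of the quincunx lattice `Qℤ²`; (b) `[−π/2,π/2]²` is a frequency support of `2ℤ²`. -/
theorem stmt_11 (Q : Matrix (Fin 2) (Fin 2) ℝ) (hQ : Q = Matrix.of ![![2, 2], ![-2, 2]]) :
    (∀ j : Fin 6, ∀ n : Fin 2 → ℝ, (∃ m : Fin 2 → ℤ, n = Q.mulVec fun i => (m i : ℝ)) →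
      ∫ ξ in trapPair j.succ, Complex.exp (Complex.I * (n ⬝ᵥ ξ : ℝ)) =
        if n = 0 then ((π ^ 2 / 2 : ℝ) : ℂ) else 0) ∧
    (∀ n : Fin 2 → ℝ, (∃ m : Fin 2 → ℤ, n = fun i => 2 * (m i : ℝ)) →
      ∫ ξ in trapPair 0, Complex.exp (Complex.I * (n ⬝ᵥ ξ : ℝ)) =
        if n = 0 then ((π ^ 2 : ℝ) : ℂ) else 0) := by
  have hdot : ∀ (n : Fin 2 → ℝ) (p : ℝ × ℝ), n ⬝ᵥ ![p.1, p.2] = n 0 * p.1 + n 1 * p.2 :=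
    fun n p => by simp [dotProduct, Fin.sum_univ_two]
  have hzero : ∀ n : Fin 2 → ℝ, n = 0 ↔ n 0 = 0 ∧ n 1 = 0 :=
    fun n => by simp [funext_iff, Fin.forall_fin_two]
  refine ⟨fun j n ⟨m, hn⟩ => ?_, fun n ⟨m, hn⟩ => ?_⟩
  · rw [setIntegral_finTwoArrow_symm_preimage, if_congr (hzero n) rfl rfl]
    simp_rw [hdot]
    refine setIntegral_preimage_trapPair_exp j (k := m 0) (l := m 1) ?_
    subst hQ hn
    simp [Matrix.mulVec, dotProduct, Fin.sum_univ_two, mul_add, mul_sub, neg_add_eq_sub]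
  · rw [setIntegral_finTwoArrow_symm_preimage, preimage_trapPair_zero, if_congr (hzero n) rfl rfl]
    simp_rw [hdot]
    exact setIntegral_square_exp (k := m 0) (l := m 1) (by simp [hn])
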